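/- Let p be an odd prime, h, k coprime positive integers, and n ≥ 1. Then, as an identity in ℚ_p (with rational numbers embedded via the canonical map ℚ → ℚ_p), the q → 1, w → 1 specialization of the twisted p-adic Dedekind sum recovers Apostol's generalized Dedekind sum: lim_{N→∞} p^{−N} Σ_{x=0}^{p^N−1} Σ_{j=0}^{k−1} (j/k) (x + {jh/k})^n exists and equals Σ_{a=1}^{k−1} (a/k) B̄_n(ha/k) = s(h,k,n). -/

import Mathlib

/-!
The Volkenborn limit is linear, so it suffices to treat `(x + t)^n` for a single rational `t`.
Telescoping `B_{n+1}(y + 1) - B_{n+1}(y) = (n+1) y^n` turns `p^{-N} ∑_{x < p^N} (x + t)^n` into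
the difference quotient `(F(p^N) - F(0)) / p^N` of the polynomial `F(y) = B_{n+1}(y + t) / (n+1)`.
Since `p^N → 0` in `ℚ_p`, this tends to `F'(0) = B_n(t)`. The term `j = 0` vanishes, which turns
the sum over `j < k` into Apostol's sum over `1 ≤ a ≤ k - 1`.
-/

open Filter Topology

theorem Padic.tendsto_inv_pow_mul_sub_of_hasDerivAt (p : ℕ) [Fact p.Prime] {f : ℚ_[p] → ℚ_[p]}
    {f' : ℚ_[p]} (hf : HasDerivAt f f' 0) :
    Tendsto (fun N : ℕ => ((p : ℚ_[p]) ^ N)⁻¹ * (f ((p : ℚ_[p]) ^ N) - f 0)) atTop (𝓝 f') := by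
  have hpow : Tendsto (fun N : ℕ => (p : ℚ_[p]) ^ N) atTop (𝓝[≠] 0) :=
    tendsto_nhdsWithin_iff.mpr ⟨tendsto_pow_atTop_nhds_zero_of_norm_lt_one Padic.norm_p_lt_one,
      .of_forall fun N => pow_ne_zero N (Nat.cast_ne_zero.mpr (Fact.out : p.Prime).ne_zero)⟩
  have := (hasDerivAt_iff_tendsto_slope_zero.mp hf).comp hpow
  simpa only [Function.comp_def, zero_add, smul_eq_mul] using this

namespace Polynomial

theorem aeval_ratCast {K : Type*} [DivisionRing K] [CharZero K] (P : Polynomial ℚ) (t : ℚ) :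
    aeval (t : K) P = ((P.eval t : ℚ) : K) := by
  simpa using aeval_algebraMap_apply_eq_algebraMap_eval (A := K) t P

theorem bernoulli_succ_eval_add_sub_eq_mul_sum_range (n M : ℕ) (t : ℚ) :
    (bernoulli (n + 1)).eval (M + t) - (bernoulli (n + 1)).eval t
      = (n + 1) * ∑ x ∈ Finset.range M, ((x : ℚ) + t) ^ n := by
  induction M with
  | zero => simp
  | succ M ih =>
    rw [Finset.sum_range_succ, mul_add, ← ih, Nat.cast_succ, add_right_comm, add_comm _ (1 : ℚ),
      bernoulli_eval_one_add, Nat.add_sub_cancel]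
    push_cast
    ring

end Polynomial

open Polynomial (aeval) in
theorem Padic.tendsto_volkenborn_add_pow (p : ℕ) [Fact p.Prime] (n : ℕ) (t : ℚ) :
    Tendsto (fun N : ℕ => ((p : ℚ_[p]) ^ N)⁻¹ *
        ∑ x ∈ Finset.range (p ^ N), ((x : ℚ_[p]) + (t : ℚ_[p])) ^ n)
      atTop (𝓝 (((Polynomial.bernoulli n).eval t : ℚ) : ℚ_[p])) := by
  set F : ℚ_[p] → ℚ_[p] := fun y =>
    ((n : ℚ_[p]) + 1)⁻¹ * aeval (y + t) (Polynomial.bernoulli (n + 1))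
  have hn : (n : ℚ_[p]) + 1 ≠ 0 := by exact_mod_cast n.succ_ne_zero
  have hF : HasDerivAt F (((Polynomial.bernoulli n).eval t : ℚ) : ℚ_[p]) 0 := by
    refine (((Polynomial.hasDerivAt_aeval _ _).comp_add_const 0 (t : ℚ_[p])).const_mul
      ((n : ℚ_[p]) + 1)⁻¹).congr_deriv ?_
    simp [Polynomial.derivative_bernoulli_add_one, Polynomial.aeval_ratCast, hn]
  have hsum (N : ℕ) : ∑ x ∈ Finset.range (p ^ N), ((x : ℚ_[p]) + (t : ℚ_[p])) ^ n
      = F ((p : ℚ_[p]) ^ N) - F 0 := by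
    have hcast : (p : ℚ_[p]) ^ N + t = (((p ^ N : ℕ) + t : ℚ) : ℚ_[p]) := by push_cast; rfl
    simp only [F, hcast, zero_add, Polynomial.aeval_ratCast, ← mul_sub]
    rw [← Rat.cast_sub, Polynomial.bernoulli_succ_eval_add_sub_eq_mul_sum_range]
    push_cast
    field_simp
  simpa only [hsum] using Padic.tendsto_inv_pow_mul_sub_of_hasDerivAt p hF

theorem Finset.sum_range_eq_sum_Icc_one_of_apply_zero {M : Type*} [AddCommMonoid M] {f : ℕ → M}
    (hf : f 0 = 0) (k : ℕ) : ∑ i ∈ Finset.range k, f i = ∑ i ∈ Finset.Icc 1 (k - 1), f i := by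
  cases k with
  | zero => simp
  | succ k =>
    rw [Finset.sum_range_succ', hf, add_zero, Nat.add_sub_cancel,
      ← Finset.Ico_add_one_right_eq_Icc, Finset.sum_Ico_eq_sum_range, Nat.add_sub_cancel]
    simp only [add_comm 1]

theorem volkenborn_dedekind_sum_eq_apostol_general (p : ℕ) [Fact p.Prime]
    (h k : ℕ) (n : ℕ) :
    Tendsto
      (fun N : ℕ => ((p : ℚ_[p]) ^ N)⁻¹ *
        ∑ x ∈ Finset.range (p ^ N), ∑ j ∈ Finset.range k,
          (((j : ℚ) / k : ℚ) : ℚ_[p]) *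
            ((x : ℚ_[p]) + ((Int.fract ((j * h : ℚ) / k) : ℚ) : ℚ_[p])) ^ n)
      atTop
      (𝓝 (((∑ a ∈ Finset.Icc 1 (k - 1),
        ((a : ℚ) / k) * (Polynomial.bernoulli n).eval (Int.fract ((h * a : ℚ) / k)) : ℚ)
          : ℚ_[p]))) := by
  have hlim := tendsto_finsetSum (Finset.range k) fun j _ =>
    (tendsto_const_nhds (x := (((j : ℚ) / k : ℚ) : ℚ_[p]))).mul
      (Padic.tendsto_volkenborn_add_pow p n (Int.fract ((j * h : ℚ) / k)))
  convert hlim using 2 with N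
  · rw [Finset.sum_comm, Finset.mul_sum]
    simp_rw [Finset.mul_sum]
    exact Finset.sum_congr rfl fun _ _ => Finset.sum_congr rfl fun _ _ => by ring
  · rw [← Finset.sum_range_eq_sum_Icc_one_of_apply_zero (by simp)]
    push_cast
    simp_rw [mul_comm (h : ℚ)]

/-- Let `p` be an odd prime, `h, k` coprime positive integers, and `n ≥ 1`. Then, in `ℚ_p`,
the `q → 1`, `w → 1` specialization of the twisted `p`-adic Dedekind sum recovers Apostol's
generalized Dedekind sum: the Volkenborn limit
`lim_N p^(-N) ∑_{x<p^N} ∑_{j<k} (j/k) (x + {jh/k})^n` exists and equals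
`s(h,k,n) = ∑_{a=1}^{k-1} (a/k) B̄_n(ha/k)`, where `B̄_n(ha/k) = B_n({ha/k})`. -/
theorem volkenborn_dedekind_sum_eq_apostol (p : ℕ) [Fact p.Prime] (hpodd : Odd p)
    (h k : ℕ) (hh : 0 < h) (hk : 0 < k) (hcop : Nat.Coprime h k) (n : ℕ) (hn : 1 ≤ n) :
    Tendsto
      (fun N : ℕ => ((p : ℚ_[p]) ^ N)⁻¹ *
        ∑ x ∈ Finset.range (p ^ N), ∑ j ∈ Finset.range k,
          (((j : ℚ) / k : ℚ) : ℚ_[p]) *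
            ((x : ℚ_[p]) + ((Int.fract ((j * h : ℚ) / k) : ℚ) : ℚ_[p])) ^ n)
      atTop
      (𝓝 (((∑ a ∈ Finset.Icc 1 (k - 1),
        ((a : ℚ) / k) * (Polynomial.bernoulli n).eval (Int.fract ((h * a : ℚ) / k)) : ℚ)
          : ℚ_[p]))) :=
  volkenborn_dedekind_sum_eq_apostol_general p h k n
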